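/- Let G be a finite simple graph without isolated vertices. For a vertex 𝔸 = (A′₀ ⊎ A″₀ ⊂ ⋯ ⊂ A′_k ⊎ A″_k) of sd sd B(G) (a chain of nonempty simplices of B(G)), let μ′(𝔸) be the smallest nonempty set in the chain A′₀ ⊆ ⋯ ⊆ A′_k ⊆ CN(A″_k) ⊆ ⋯ ⊆ CN(A″₀), and let μ″(𝔸) be the smallest nonempty set in the chain A″₀ ⊆ ⋯ ⊆ A″_k ⊆ CN(A′_k) ⊆ ⋯ ⊆ CN(A′₀). Then μ′(𝔸) and μ″(𝔸) are well defined, μ′(𝔸) ⊎ μ″(𝔸) is a vertex of B₁(G), and the map 𝔸 ↦ μ′(𝔸) ⊎ μ″(𝔸) is a simplicial ℤ₂-map sd sd B(G) → B₁(G). -/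

import Mathlib

open Finset

attribute [local instance] Classical.propDecidable

noncomputable section

variable {V : Type*}

/-- The set `CN(A)` of common neighbors of `A` in `G` (so `CN(∅) = V`). -/
def CN [Fintype V] (G : SimpleGraph V) (A : Finset V) : Finset V :=
  Finset.univ.filter fun v => ∀ a ∈ A, G.Adj a v

/-- The shore of `S ⊆ V × {1,2}` lying over `b` (with `false` for the first copy of `V`
and `true` for the second). -/
def shore (S : Finset (V × Bool)) (b : Bool) : Finset V :=
  (S.filter fun p => p.2 = b).image Prod.fst

/-- `A' ⊎ A'' := (A' × {1}) ∪ (A'' × {2})`, with `false` for `1` and `true` for `2`. -/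
def joinPair (A' A'' : Finset V) : Finset (V × Bool) :=
  A'.image (fun v => (v, false)) ∪ A''.image (fun v => (v, true))

/-- The ℤ₂-action on subsets of `V × {1,2}`: interchange the two copies of `V`,
i.e. `A' ⊎ A'' ↦ A'' ⊎ A'`. -/
def swapFinset (S : Finset (V × Bool)) : Finset (V × Bool) :=
  S.image fun p => (p.1, !p.2)

/-- `G[A', A'']` is complete: every vertex of `A'` is adjacent to every vertex of `A''`. -/
def IsCompleteBip (G : SimpleGraph V) (A' A'' : Finset V) : Prop :=
  ∀ a ∈ A', ∀ b ∈ A'', G.Adj a b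

/-- Simplices of the box complex `B(G)`: sets `A' ⊎ A''` with `A'`, `A''` disjoint,
`G[A', A'']` complete and `CN(A') ≠ ∅ ≠ CN(A'')`. -/
def BoxSimplex [Fintype V] (G : SimpleGraph V) (S : Finset (V × Bool)) : Prop :=
  Disjoint (shore S false) (shore S true) ∧
  IsCompleteBip G (shore S false) (shore S true) ∧
  (CN G (shore S false)).Nonempty ∧ (CN G (shore S true)).Nonempty

/-- Simplices of the box complex `B₀(G)`: sets `A' ⊎ A''` with `A'`, `A''` disjoint and
`G[A', A'']` complete. -/
def Box0Simplex (G : SimpleGraph V) (S : Finset (V × Bool)) : Prop :=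
  Disjoint (shore S false) (shore S true) ∧
  IsCompleteBip G (shore S false) (shore S true)

/-- Vertices of `B₁(G)`: sets `A' ⊎ A''` with `A'`, `A''` nonempty, disjoint and
`G[A', A'']` complete. -/
def B1Vertex (G : SimpleGraph V) (S : Finset (V × Bool)) : Prop :=
  (shore S false).Nonempty ∧ (shore S true).Nonempty ∧
  Disjoint (shore S false) (shore S true) ∧
  IsCompleteBip G (shore S false) (shore S true)

/-- Simplices of the order complex `B₁(G)`: chains of vertices of `B₁(G)` under inclusion. -/
def B1Simplex (G : SimpleGraph V) (C : Finset (Finset (V × Bool))) : Prop :=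
  (∀ T ∈ C, B1Vertex G T) ∧ IsChain (· ⊆ ·) (C : Set (Finset (V × Bool)))

/-- Simplices of the barycentric subdivision `sd K` of the complex `K` whose simplices are
given by the predicate `P`: chains of nonempty simplices of `K` under inclusion. -/
def sdSimplex {γ : Type*} (P : Finset γ → Prop) (C : Finset (Finset γ)) : Prop :=
  (∀ S ∈ C, P S ∧ S.Nonempty) ∧ IsChain (· ⊆ ·) (C : Set (Finset γ))

/-- Vertices of `sd sd B(G)`: nonempty chains `𝔸` of nonempty simplices of `B(G)`. -/
def SdSdBVertex [Fintype V] (G : SimpleGraph V) (𝔸 : Finset (Finset (V × Bool))) : Prop :=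
  𝔸.Nonempty ∧ sdSimplex (BoxSimplex G) 𝔸

/-- For a vertex `𝔸 = (A'₀ ⊎ A''₀ ⊂ ⋯ ⊂ A'_k ⊎ A''_k)` of `sd sd B(G)`, the chain of sets
`A'₀ ⊆ ⋯ ⊆ A'_k ⊆ CN(A''_k) ⊆ ⋯ ⊆ CN(A''₀)` (as a set of sets). -/
def fam1 [Fintype V] (G : SimpleGraph V) (𝔸 : Finset (Finset (V × Bool))) :
    Finset (Finset V) :=
  𝔸.image (fun S => shore S false) ∪ 𝔸.image (fun S => CN G (shore S true))

/-- For a vertex `𝔸 = (A'₀ ⊎ A''₀ ⊂ ⋯ ⊂ A'_k ⊎ A''_k)` of `sd sd B(G)`, the chain of sets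
`A''₀ ⊆ ⋯ ⊆ A''_k ⊆ CN(A'_k) ⊆ ⋯ ⊆ CN(A'₀)` (as a set of sets). -/
def fam2 [Fintype V] (G : SimpleGraph V) (𝔸 : Finset (Finset (V × Bool))) :
    Finset (Finset V) :=
  𝔸.image (fun S => shore S true) ∪ 𝔸.image (fun S => CN G (shore S false))

/-- `X` is the smallest nonempty set of the family `fam`. -/
def IsMinNonempty {α : Type*} (fam : Finset (Finset α)) (X : Finset α) : Prop :=
  X ∈ fam ∧ X.Nonempty ∧ ∀ Y ∈ fam, Y.Nonempty → X ⊆ Y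

/-!
Along a chain `𝔸` of simplices `A'ᵢ ⊎ A''ᵢ` of `B(G)`, completeness of each `G[A'ᵢ, A''ᵢ]` gives
`A'ᵢ ⊆ CN(A''ⱼ)` for all `i, j`, so both families are chains and have smallest nonempty members
(`CN(A''ᵢ) ≠ ∅` provides one). Each minimum is a shore or the common neighbourhood of a nonempty
opposite shore, which then contains the other minimum; when both are shores the chain condition
applies. Hence `G[μ', μ'']` is complete, and disjoint since `G` is loopless. Enlarging `𝔸` enlarges
both families and so shrinks both minima, and swapping the copies of `V` exchanges the families.
-/

lemma mem_shore {S : Finset (V × Bool)} {b : Bool} {v : V} : v ∈ shore S b ↔ (v, b) ∈ S := by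
  simp [shore]

lemma shore_mono {S T : Finset (V × Bool)} (h : S ⊆ T) (b : Bool) : shore S b ⊆ shore T b :=
  fun _ hv => mem_shore.2 (h (mem_shore.1 hv))

lemma shore_false_nonempty_or_shore_true_nonempty {S : Finset (V × Bool)} (hS : S.Nonempty) :
    (shore S false).Nonempty ∨ (shore S true).Nonempty := by
  obtain ⟨⟨v, b⟩, hv⟩ := hS
  cases b
  exacts [.inl ⟨v, mem_shore.2 hv⟩, .inr ⟨v, mem_shore.2 hv⟩]

lemma shore_swapFinset (S : Finset (V × Bool)) (b : Bool) :
    shore (swapFinset S) b = shore S !b := by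
  ext v
  simp only [mem_shore, swapFinset, mem_image, Prod.ext_iff]
  constructor
  · rintro ⟨⟨w, c⟩, hw, rfl, rfl⟩
    simpa using hw
  · exact fun h => ⟨(v, !b), h, rfl, Bool.not_not b⟩

lemma shore_joinPair (A' A'' : Finset V) (b : Bool) :
    shore (joinPair A' A'') b = bif b then A'' else A' := by
  ext v
  cases b <;> simp [mem_shore, joinPair]

lemma swapFinset_joinPair (A' A'' : Finset V) : swapFinset (joinPair A' A'') = joinPair A'' A' := by
  ext ⟨v, b⟩
  cases b <;> simp [swapFinset, joinPair]

lemma joinPair_mono {A' A'' B' B'' : Finset V} (h' : A' ⊆ B') (h'' : A'' ⊆ B'') :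
    joinPair A' A'' ⊆ joinPair B' B'' :=
  union_subset_union (image_subset_image h') (image_subset_image h'')

lemma isChain_image_swapFinset {𝔸 : Finset (Finset (V × Bool))}
    (hc : IsChain (· ⊆ ·) (𝔸 : Set (Finset (V × Bool)))) :
    IsChain (· ⊆ ·) ((𝔸.image swapFinset : Finset _) : Set (Finset (V × Bool))) := by
  rw [coe_image]
  exact hc.image_of_map_rel _ _ swapFinset fun _ _ => image_subset_image

section IsCompleteBip

variable {G : SimpleGraph V} {A B A₁ B₁ : Finset V}

lemma IsCompleteBip.symm (h : IsCompleteBip G A B) : IsCompleteBip G B A :=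
  fun b hb a ha => (h a ha b hb).symm

lemma IsCompleteBip.mono (h : IsCompleteBip G A B) (hA : A₁ ⊆ A) (hB : B₁ ⊆ B) :
    IsCompleteBip G A₁ B₁ :=
  fun a ha b hb => h a (hA ha) b (hB hb)

lemma IsCompleteBip.disjoint (h : IsCompleteBip G A B) : Disjoint A B :=
  disjoint_left.2 fun v hA hB => G.irrefl (h v hA v hB)

lemma b1Vertex_joinPair (hA : A.Nonempty) (hB : B.Nonempty) (h : IsCompleteBip G A B) :
    B1Vertex G (joinPair A B) := by
  simp only [B1Vertex, shore_joinPair, cond_false, cond_true]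
  exact ⟨hA, hB, h.disjoint, h⟩

lemma isCompleteBip_shore_of_comparable {S T : Finset (V × Bool)}
    (hS : IsCompleteBip G (shore S false) (shore S true))
    (hT : IsCompleteBip G (shore T false) (shore T true)) (h : S ⊆ T ∨ T ⊆ S) :
    IsCompleteBip G (shore S false) (shore T true) := by
  rcases h with h | h
  exacts [hT.mono (shore_mono h false) subset_rfl, hS.mono subset_rfl (shore_mono h true)]

variable [Fintype V]

lemma mem_CN {v : V} : v ∈ CN G A ↔ ∀ a ∈ A, G.Adj a v := by
  simp [CN]

lemma CN_empty : CN G ∅ = univ := by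
  ext; simp [mem_CN]

lemma CN_anti (h : A ⊆ B) : CN G B ⊆ CN G A :=
  fun _ hv => mem_CN.2 fun a ha => mem_CN.1 hv a (h ha)

lemma subset_CN_iff : A ⊆ CN G B ↔ IsCompleteBip G B A :=
  ⟨fun h b hb _ ha => mem_CN.1 (h ha) b hb, fun h a ha => mem_CN.2 fun b hb => h b hb a ha⟩

lemma isCompleteBip_CN (h : A ⊆ B) : IsCompleteBip G A (CN G B) :=
  subset_CN_iff.1 (CN_anti h)

end IsCompleteBip

section IsMinNonempty

variable {α : Type*} {fam fam₁ : Finset (Finset α)} {X Y : Finset α}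

lemma IsMinNonempty.eq (hX : IsMinNonempty fam X) (hY : IsMinNonempty fam Y) : X = Y :=
  (hX.2.2 Y hY.1 hY.2.1).antisymm (hY.2.2 X hX.1 hX.2.1)

lemma IsMinNonempty.anti (h : fam ⊆ fam₁) (hX : IsMinNonempty fam X)
    (hY : IsMinNonempty fam₁ Y) : Y ⊆ X :=
  hY.2.2 X (h hX.1) hX.2.1

lemma IsChain.existsUnique_isMinNonempty (hc : IsChain (· ⊆ ·) (fam : Set (Finset α)))
    (hne : ∃ X ∈ fam, X.Nonempty) : ∃! X, IsMinNonempty fam X := by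
  obtain ⟨X, hX, hmin⟩ := (fam.filter Finset.Nonempty).exists_min_image card
    (by simpa [Finset.Nonempty, and_comm] using hne)
  rw [mem_filter] at hX
  have hXmin : IsMinNonempty fam X := by
    refine ⟨hX.1, hX.2, fun Y hY hYne => ?_⟩
    rcases hc.total (mem_coe.2 hX.1) (mem_coe.2 hY) with h | h
    · exact h
    · exact (eq_of_subset_of_card_le h (hmin Y (mem_filter.2 ⟨hY, hYne⟩))).ge
  exact ⟨X, hXmin, fun Y hY => hY.eq hXmin⟩

end IsMinNonempty

section Fam

variable [Fintype V] {G : SimpleGraph V} {𝔸 𝔹 : Finset (Finset (V × Bool))} {X Y : Finset V}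

lemma BoxSimplex.swapFinset {S : Finset (V × Bool)} (h : BoxSimplex G S) :
    BoxSimplex G (swapFinset S) := by
  obtain ⟨hd, hc, h₁, h₂⟩ := h
  simp only [BoxSimplex, shore_swapFinset, Bool.not_false, Bool.not_true]
  exact ⟨hd.symm, hc.symm, h₂, h₁⟩

lemma SdSdBVertex.image_swapFinset (h : SdSdBVertex G 𝔸) :
    SdSdBVertex G (𝔸.image swapFinset) := by
  obtain ⟨hne, hP, hc⟩ := h
  refine ⟨hne.image _, ?_, isChain_image_swapFinset hc⟩
  simp only [mem_image, forall_exists_index, and_imp, forall_apply_eq_imp_iff₂]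
  exact fun S hS => ⟨(hP S hS).1.swapFinset, (hP S hS).2.image _⟩

lemma fam1_image_swapFinset : fam1 G (𝔸.image swapFinset) = fam2 G 𝔸 := by
  simp only [fam1, fam2, image_image, Function.comp_def, shore_swapFinset, Bool.not_false,
    Bool.not_true]

lemma fam2_image_swapFinset : fam2 G (𝔸.image swapFinset) = fam1 G 𝔸 := by
  simp only [fam1, fam2, image_image, Function.comp_def, shore_swapFinset, Bool.not_false,
    Bool.not_true]

lemma fam1_mono (h : 𝔸 ⊆ 𝔹) : fam1 G 𝔸 ⊆ fam1 G 𝔹 :=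
  union_subset_union (image_subset_image h) (image_subset_image h)

lemma fam2_mono (h : 𝔸 ⊆ 𝔹) : fam2 G 𝔸 ⊆ fam2 G 𝔹 :=
  union_subset_union (image_subset_image h) (image_subset_image h)

lemma shore_false_mem_fam1 {S : Finset (V × Bool)} (hS : S ∈ 𝔸) : shore S false ∈ fam1 G 𝔸 :=
  mem_union_left _ (mem_image_of_mem _ hS)

lemma shore_true_mem_fam2 {S : Finset (V × Bool)} (hS : S ∈ 𝔸) : shore S true ∈ fam2 G 𝔸 :=
  mem_union_left _ (mem_image_of_mem _ hS)

lemma isChain_fam1 (hc : IsChain (· ⊆ ·) (𝔸 : Set (Finset (V × Bool))))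
    (hcomp : ∀ S ∈ 𝔸, IsCompleteBip G (shore S false) (shore S true)) :
    IsChain (· ⊆ ·) (fam1 G 𝔸 : Set (Finset V)) := by
  intro X hX Y hY _
  simp only [fam1, coe_union, coe_image, Set.mem_union, Set.mem_image, mem_coe] at hX hY
  rcases hX with ⟨S, hS, rfl⟩ | ⟨S, hS, rfl⟩ <;> rcases hY with ⟨T, hT, rfl⟩ | ⟨T, hT, rfl⟩
  · exact (hc.total hS hT).imp (shore_mono · false) (shore_mono · false)
  · exact .inl <| subset_CN_iff.2 <|
      (isCompleteBip_shore_of_comparable (hcomp S hS) (hcomp T hT) (hc.total hS hT)).symm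
  · exact .inr <| subset_CN_iff.2 <|
      (isCompleteBip_shore_of_comparable (hcomp T hT) (hcomp S hS) (hc.total hT hS)).symm
  · exact (hc.total hT hS).imp (CN_anti <| shore_mono · true) (CN_anti <| shore_mono · true)

lemma SdSdBVertex.existsUnique_isMinNonempty_fam1 (h : SdSdBVertex G 𝔸) :
    ∃! X, IsMinNonempty (fam1 G 𝔸) X := by
  obtain ⟨S, hS⟩ := h.1
  exact (isChain_fam1 h.2.2 fun T hT => (h.2.1 T hT).1.2.1).existsUnique_isMinNonempty
    ⟨_, mem_union_right _ (mem_image_of_mem _ hS), (h.2.1 S hS).1.2.2.2⟩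

lemma SdSdBVertex.existsUnique_isMinNonempty_fam2 (h : SdSdBVertex G 𝔸) :
    ∃! X, IsMinNonempty (fam2 G 𝔸) X := by
  simpa only [fam1_image_swapFinset] using h.image_swapFinset.existsUnique_isMinNonempty_fam1

lemma IsMinNonempty.fam1_cases (h𝔸 : ∀ S ∈ 𝔸, S.Nonempty) (hX : IsMinNonempty (fam1 G 𝔸) X) :
    (∃ S ∈ 𝔸, X = shore S false) ∨
      ∃ S ∈ 𝔸, (shore S true).Nonempty ∧ X = CN G (shore S true) := by
  obtain ⟨hmem, -, hmin⟩ := hX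
  simp only [fam1, mem_union, mem_image] at hmem
  rcases hmem with ⟨S, hS, rfl⟩ | ⟨S, hS, rfl⟩
  · exact .inl ⟨S, hS, rfl⟩
  rcases (shore S true).eq_empty_or_nonempty with he | hne
  · have hF : (shore S false).Nonempty :=
      (shore_false_nonempty_or_shore_true_nonempty (h𝔸 S hS)).resolve_right (by simp [he])
    refine .inl ⟨S, hS, (hmin _ (shore_false_mem_fam1 hS) hF).antisymm ?_⟩
    simp [he, CN_empty]
  · exact .inr ⟨S, hS, hne, rfl⟩

lemma IsMinNonempty.fam2_cases (h𝔸 : ∀ S ∈ 𝔸, S.Nonempty) (hY : IsMinNonempty (fam2 G 𝔸) Y) :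
    (∃ S ∈ 𝔸, Y = shore S true) ∨
      ∃ S ∈ 𝔸, (shore S false).Nonempty ∧ Y = CN G (shore S false) := by
  rw [← fam1_image_swapFinset] at hY
  have h𝔸' : ∀ S ∈ 𝔸.image swapFinset, S.Nonempty := by
    simpa [swapFinset] using h𝔸
  simpa [shore_swapFinset] using hY.fam1_cases h𝔸'

lemma SdSdBVertex.isCompleteBip_of_isMinNonempty (h : SdSdBVertex G 𝔸)
    (hX : IsMinNonempty (fam1 G 𝔸) X) (hY : IsMinNonempty (fam2 G 𝔸) Y) :
    IsCompleteBip G X Y := by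
  have hne : ∀ S ∈ 𝔸, S.Nonempty := fun S hS => (h.2.1 S hS).2
  have hcomp : ∀ S ∈ 𝔸, IsCompleteBip G (shore S false) (shore S true) :=
    fun S hS => (h.2.1 S hS).1.2.1
  rcases hY.fam2_cases hne with ⟨T, hT, rfl⟩ | ⟨T, hT, hTne, rfl⟩
  · rcases hX.fam1_cases hne with ⟨S, hS, rfl⟩ | ⟨S, hS, hSne, rfl⟩
    · exact isCompleteBip_shore_of_comparable (hcomp S hS) (hcomp T hT) (h.2.2.total hS hT)
    · exact (isCompleteBip_CN (hY.2.2 _ (shore_true_mem_fam2 hS) hSne)).symm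
  · exact isCompleteBip_CN (hX.2.2 _ (shore_false_mem_fam1 hT) hTne)

end Fam

theorem sd_sd_box_to_B1_general [Fintype V] (G : SimpleGraph V) :
    (∀ 𝔸, SdSdBVertex G 𝔸 →
      (∃! X, IsMinNonempty (fam1 G 𝔸) X) ∧ (∃! X, IsMinNonempty (fam2 G 𝔸) X)) ∧
    (∀ μ' μ'' : Finset (Finset (V × Bool)) → Finset V,
      (∀ 𝔸, SdSdBVertex G 𝔸 → IsMinNonempty (fam1 G 𝔸) (μ' 𝔸)) →
      (∀ 𝔸, SdSdBVertex G 𝔸 → IsMinNonempty (fam2 G 𝔸) (μ'' 𝔸)) →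
      (∀ 𝔸, SdSdBVertex G 𝔸 → B1Vertex G (joinPair (μ' 𝔸) (μ'' 𝔸))) ∧
      (∀ 𝒞 : Finset (Finset (Finset (V × Bool))),
        sdSimplex (sdSimplex (BoxSimplex G)) 𝒞 →
        B1Simplex G (𝒞.image fun 𝔸 => joinPair (μ' 𝔸) (μ'' 𝔸))) ∧
      (∀ 𝔸, SdSdBVertex G 𝔸 →
        joinPair (μ' (𝔸.image swapFinset)) (μ'' (𝔸.image swapFinset)) =
          swapFinset (joinPair (μ' 𝔸) (μ'' 𝔸)))) := by
  refine ⟨fun 𝔸 h => ⟨h.existsUnique_isMinNonempty_fam1, h.existsUnique_isMinNonempty_fam2⟩,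
    fun μ' μ'' hμ' hμ'' => ?_⟩
  have hvert : ∀ 𝔸, SdSdBVertex G 𝔸 → B1Vertex G (joinPair (μ' 𝔸) (μ'' 𝔸)) := fun 𝔸 h =>
    b1Vertex_joinPair (hμ' 𝔸 h).2.1 (hμ'' 𝔸 h).2.1
      (h.isCompleteBip_of_isMinNonempty (hμ' 𝔸 h) (hμ'' 𝔸 h))
  have hanti : ∀ 𝔸 𝔹, SdSdBVertex G 𝔸 → SdSdBVertex G 𝔹 → 𝔸 ⊆ 𝔹 →
      joinPair (μ' 𝔹) (μ'' 𝔹) ⊆ joinPair (μ' 𝔸) (μ'' 𝔸) := fun 𝔸 𝔹 hA hB h =>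
    joinPair_mono ((hμ' 𝔸 hA).anti (fam1_mono h) (hμ' 𝔹 hB))
      ((hμ'' 𝔸 hA).anti (fam2_mono h) (hμ'' 𝔹 hB))
  refine ⟨hvert, fun 𝒞 h𝒞 => ?_, fun 𝔸 h => ?_⟩
  · have hsd : ∀ 𝔸 ∈ 𝒞, SdSdBVertex G 𝔸 := fun 𝔸 h𝔸 => ⟨(h𝒞.1 𝔸 h𝔸).2, (h𝒞.1 𝔸 h𝔸).1⟩
    refine ⟨by simpa using fun 𝔸 h𝔸 => hvert 𝔸 (hsd 𝔸 h𝔸), ?_⟩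
    rw [coe_image]
    rintro _ ⟨𝔸, h𝔸, rfl⟩ _ ⟨𝔹, h𝔹, rfl⟩ -
    exact (h𝒞.2.total h𝔸 h𝔹).symm.imp (hanti _ _ (hsd 𝔹 h𝔹) (hsd 𝔸 h𝔸))
      (hanti _ _ (hsd 𝔸 h𝔸) (hsd 𝔹 h𝔹))
  · have h' := h.image_swapFinset
    have e₁ : μ' (𝔸.image swapFinset) = μ'' 𝔸 :=
      (fam1_image_swapFinset (G := G) ▸ hμ' _ h').eq (hμ'' 𝔸 h)
    have e₂ : μ'' (𝔸.image swapFinset) = μ' 𝔸 :=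
      (fam2_image_swapFinset (G := G) ▸ hμ'' _ h').eq (hμ' 𝔸 h)
    rw [e₁, e₂, swapFinset_joinPair]

/-- The smallest nonempty sets `μ'(𝔸)`, `μ''(𝔸)` of the two chains associated with a
vertex `𝔸` of `sd sd B(G)` are well defined, `μ'(𝔸) ⊎ μ''(𝔸)` is a vertex of `B₁(G)`,
and `𝔸 ↦ μ'(𝔸) ⊎ μ''(𝔸)` is a simplicial ℤ₂-map `sd sd B(G) → B₁(G)`. -/
theorem sd_sd_box_to_B1 [Fintype V] (G : SimpleGraph V) (hiso : ∀ v : V, ∃ u, G.Adj v u) :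
    (∀ 𝔸, SdSdBVertex G 𝔸 →
      (∃! X, IsMinNonempty (fam1 G 𝔸) X) ∧ (∃! X, IsMinNonempty (fam2 G 𝔸) X)) ∧
    (∀ μ' μ'' : Finset (Finset (V × Bool)) → Finset V,
      (∀ 𝔸, SdSdBVertex G 𝔸 → IsMinNonempty (fam1 G 𝔸) (μ' 𝔸)) →
      (∀ 𝔸, SdSdBVertex G 𝔸 → IsMinNonempty (fam2 G 𝔸) (μ'' 𝔸)) →
      (∀ 𝔸, SdSdBVertex G 𝔸 → B1Vertex G (joinPair (μ' 𝔸) (μ'' 𝔸))) ∧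
      (∀ 𝒞 : Finset (Finset (Finset (V × Bool))),
        sdSimplex (sdSimplex (BoxSimplex G)) 𝒞 →
        B1Simplex G (𝒞.image fun 𝔸 => joinPair (μ' 𝔸) (μ'' 𝔸))) ∧
      (∀ 𝔸, SdSdBVertex G 𝔸 →
        joinPair (μ' (𝔸.image swapFinset)) (μ'' (𝔸.image swapFinset)) =
          swapFinset (joinPair (μ' 𝔸) (μ'' 𝔸)))) :=
  sd_sd_box_to_B1_general G
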